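/- arXiv:2208.05656 — 2 statements merged into one kernel-verified Lean document; each statement's English description precedes it below -/
import Mathlib

section
/- Let π be a bicausal coupling between P, Q ∈ 𝒫_p(ℝ^T) and let g : ℝ^T → ℝ be Borel with E_P[|g(X)|] < ∞. Then for every t ∈ {1,...,T}, E_π[g(X) | ℱ_t^{X,Y}] = E_P[g(X) | ℱ_t^X] holds π-almost surely, where ℱ_t^{X,Y} = σ(X_1,...,X_t,Y_1,...,Y_t) and ℱ_t^X = σ(X_1,...,X_t). -/
open MeasureTheory ProbabilityTheory Filter Set

noncomputable section

abbrev PathSp (T : ℕ) := Fin T → ℝ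

/-- σ-algebra generated by the first `t` coordinates `X_1,…,X_t` on path space. -/
def FX (T t : ℕ) : MeasurableSpace (PathSp T) :=
  ⨆ i : Fin T, ⨆ _ : (i : ℕ) < t, MeasurableSpace.comap (fun x => x i) inferInstance

def prodX (T t : ℕ) : MeasurableSpace (PathSp T × PathSp T) := (FX T t).comap Prod.fst

def prodY (T t : ℕ) : MeasurableSpace (PathSp T × PathSp T) := (FX T t).comap Prod.snd

def prodXY (T t : ℕ) : MeasurableSpace (PathSp T × PathSp T) := prodX T t ⊔ prodY T t

def IsCoupling {T : ℕ} (π : Measure (PathSp T × PathSp T)) (P Q : Measure (PathSp T)) : Prop :=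
  π.map Prod.fst = P ∧ π.map Prod.snd = Q

/-- Causality of a coupling: conditionally on `X_1,…,X_t`, the variables `Y_1,…,Y_t`
are independent of `X_1,…,X_T`. -/
def Causal (T : ℕ) (π : Measure (PathSp T × PathSp T)) : Prop :=
  ∀ t ≤ T, ∀ A : Set (PathSp T), MeasurableSet[FX T t] A →
    (π[fun z => A.indicator (fun _ => (1:ℝ)) z.2 | prodX T T]) =ᵐ[π]
    (π[fun z => A.indicator (fun _ => (1:ℝ)) z.2 | prodX T t])

def Bicausal (T : ℕ) (π : Measure (PathSp T × PathSp T)) : Prop :=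
  Causal T π ∧ ∀ t ≤ T, ∀ A : Set (PathSp T), MeasurableSet[FX T t] A →
    (π[fun z => A.indicator (fun _ => (1:ℝ)) z.1 | prodY T T]) =ᵐ[π]
    (π[fun z => A.indicator (fun _ => (1:ℝ)) z.1 | prodY T t])

/-- `P` has a finite `p`-th moment. -/
def FiniteMoment {T : ℕ} (p : ℝ) (P : Measure (PathSp T)) : Prop :=
  ∀ t : Fin T, MemLp (fun x => x t) (ENNReal.ofReal p) P

/-- The adapted Wasserstein distance of order `p`. -/
def AW (T : ℕ) (p : ℝ) (P Q : Measure (PathSp T)) : ℝ :=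
  sInf { r | ∃ π : Measure (PathSp T × PathSp T), IsCoupling π P Q ∧ Bicausal T π ∧
    r = (∑ t : Fin T, ∫ z, |z.1 t - z.2 t| ^ p ∂π) ^ (1 / p) }

/-- The closed ball of radius `r` around `P` in the adapted Wasserstein distance,
within the set of probability measures with finite `p`-th moment. -/
def AWball (T : ℕ) (p : ℝ) (P : Measure (PathSp T)) (r : ℝ) : Set (Measure (PathSp T)) :=
  { Q | IsProbabilityMeasure Q ∧ FiniteMoment p Q ∧ AW T p P Q ≤ r }

/-- Partial derivative `∂_{x_t} f`. -/
def pd {T : ℕ} (f : PathSp T → ℝ) (x : PathSp T) (t : Fin T) : ℝ :=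
  fderiv ℝ f x (Pi.single t 1)

/-! Causality says that, given `X_{1:t}`, the variables `Y_{1:t}` carry no further information
about the whole path `X`, so they can be dropped when conditioning `g(X)` on `ℱ_t^{X,Y}`.
Concretely, on a rectangle `{X_{1:t} ∈ B, Y_{1:t} ∈ C}` both `g(X)` and `E_π[g(X) | X_{1:t}]`
integrate to `E_π[1_B(X) g(X) E_π[1_C(Y) | X_{1:t}]]`: condition first on all of `X` (which turns
`1_C(Y)` into `E_π[1_C(Y) | X]`, equal to `E_π[1_C(Y) | X_{1:t}]` by causality) and then on
`X_{1:t}`. A π-λ argument extends this to `ℱ_t^{X,Y}`, and `E_π[g(X) | X_{1:t}]` is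
`E_P[g | ℱ_t^X](X)` because `X` has law `P` under `π`. -/

section PiSystem

variable {α : Type*}

theorem IsPiSystem.image2_inter {S T : Set (Set α)} (hS : IsPiSystem S)
    (hT : IsPiSystem T) : IsPiSystem (image2 (· ∩ ·) S T) := by
  rintro _ ⟨s₁, hs₁, t₁, ht₁, rfl⟩ _ ⟨s₂, hs₂, t₂, ht₂, rfl⟩ hne
  refine ⟨s₁ ∩ s₂, hS s₁ hs₁ s₂ hs₂ ?_, t₁ ∩ t₂, hT t₁ ht₁ t₂ ht₂ ?_, ?_⟩
  · exact hne.mono fun x hx => ⟨hx.1.1, hx.2.1⟩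
  · exact hne.mono fun x hx => ⟨hx.1.2, hx.2.2⟩
  · exact inter_inter_inter_comm s₁ s₂ t₁ t₂

theorem MeasurableSpace.generateFrom_image2_inter (m₁ m₂ : MeasurableSpace α) :
    generateFrom (image2 (· ∩ ·) {s | MeasurableSet[m₁] s} {t | MeasurableSet[m₂] t})
      = m₁ ⊔ m₂ := by
  refine le_antisymm (generateFrom_le ?_) (sup_le ?_ ?_)
  · rintro _ ⟨s, hs, t, ht, rfl⟩
    exact (le_sup_left (b := m₂) s hs).inter (le_sup_right (a := m₁) t ht)
  · exact fun s hs => measurableSet_generateFrom ⟨s, hs, univ, .univ, inter_univ s⟩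
  · exact fun t ht => measurableSet_generateFrom ⟨univ, .univ, t, ht, univ_inter t⟩

end PiSystem

section SetIntegral

variable {Ω E : Type*} [NormedAddCommGroup E] [NormedSpace ℝ E] {m m₀ : MeasurableSpace Ω}
  {μ : Measure Ω}

theorem setIntegral_eq_setIntegral_of_isPiSystem {S : Set (Set Ω)} (hm : m ≤ m₀)
    (h_eq : m = MeasurableSpace.generateFrom S) (h_inter : IsPiSystem S) {f g : Ω → E}
    (hf : Integrable f μ) (hg : Integrable g μ)
    (basic : ∀ s ∈ S, ∫ x in s, f x ∂μ = ∫ x in s, g x ∂μ)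
    (h_univ : ∫ x, f x ∂μ = ∫ x, g x ∂μ) {s : Set Ω} (hs : MeasurableSet[m] s) :
    ∫ x in s, f x ∂μ = ∫ x in s, g x ∂μ := by
  induction s, hs using MeasurableSpace.induction_on_inter h_eq h_inter with
  | empty => simp
  | basic s hs => exact basic s hs
  | compl s hs ih =>
    have hf' := integral_add_compl (hm s hs) hf
    have hg' := integral_add_compl (hm s hs) hg
    rw [← sub_eq_of_eq_add' hf'.symm, ← sub_eq_of_eq_add' hg'.symm, ih, h_univ]
  | iUnion s hdisj hs ih =>
    rw [integral_iUnion (fun i => hm _ (hs i)) hdisj hf.integrableOn,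
      integral_iUnion (fun i => hm _ (hs i)) hdisj hg.integrableOn]
    exact tsum_congr ih

end SetIntegral

section CondExp

variable {Ω : Type*} {m m₀ : MeasurableSpace Ω} {μ : Measure Ω}

theorem ae_norm_condExp_indicator_one_le (C : Set Ω) :
    ∀ᵐ x ∂μ, ‖μ[C.indicator (fun _ => (1 : ℝ)) | m] x‖ ≤ 1 :=
  ae_bdd_norm_condExp_of_ae_bdd_norm <| .of_forall fun _ =>
    (norm_indicator_le_norm_self _ _).trans norm_one.le

variable [IsFiniteMeasure μ]

theorem setIntegral_inter_eq_setIntegral_mul_condExp_indicator (hm : m ≤ m₀) {f : Ω → ℝ}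
    (hf : StronglyMeasurable[m] f) (hf_int : Integrable f μ) {B C : Set Ω}
    (hB : MeasurableSet[m] B) (hC : MeasurableSet C) :
    ∫ x in B ∩ C, f x ∂μ = ∫ x in B, f x * μ[C.indicator (fun _ => (1 : ℝ)) | m] x ∂μ := by
  have h_ind : C.indicator f = f * C.indicator (fun _ => (1 : ℝ)) := by
    ext x; by_cases hx : x ∈ C <;> simp [hx]
  have h_int : Integrable (f * C.indicator (fun _ => (1 : ℝ))) μ :=
    h_ind ▸ hf_int.indicator hC
  rw [← setIntegral_indicator hC, h_ind, ← setIntegral_condExp hm h_int hB]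
  exact setIntegral_congr_ae (hm B hB) <|
    (condExp_mul_of_stronglyMeasurable_left hf h_int ((integrable_const 1).indicator hC)).mono
      fun x hx _ => hx

theorem setIntegral_mul_eq_setIntegral_condExp_mul (hm : m ≤ m₀) {f φ : Ω → ℝ} {R : ℝ}
    (hf : Integrable f μ) (hφ : StronglyMeasurable[m] φ) (hφ_bdd : ∀ᵐ x ∂μ, ‖φ x‖ ≤ R)
    {B : Set Ω} (hB : MeasurableSet[m] B) :
    ∫ x in B, f x * φ x ∂μ = ∫ x in B, μ[f | m] x * φ x ∂μ := by
  have h_int : Integrable (f * φ) μ := hf.mul_bdd (hφ.mono hm).aestronglyMeasurable hφ_bdd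
  refine (setIntegral_condExp hm h_int hB).symm.trans <| setIntegral_congr_ae (hm B hB) <|
    (condExp_mul_of_stronglyMeasurable_right hφ h_int hf).mono fun x hx _ => hx

theorem condExp_sup_ae_eq_of_condExp_indicator_ae_eq {m₁ m₂ m' : MeasurableSpace Ω}
    (h₁₂ : m₁ ≤ m₂) (hm₂ : m₂ ≤ m₀) (hm' : m' ≤ m₀)
    (h_cond : ∀ C, MeasurableSet[m'] C → μ[C.indicator (fun _ => (1 : ℝ)) | m₂]
      =ᵐ[μ] μ[C.indicator (fun _ => (1 : ℝ)) | m₁])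
    {f : Ω → ℝ} (hf : StronglyMeasurable[m₂] f) (hf_int : Integrable f μ) :
    μ[f | m₁ ⊔ m'] =ᵐ[μ] μ[f | m₁] := by
  have hm₁ : m₁ ≤ m₀ := h₁₂.trans hm₂
  have hsup : m₁ ⊔ m' ≤ m₀ := sup_le hm₁ hm'
  have hcond_int : Integrable (μ[f | m₁]) μ := integrable_condExp
  have h_rect : ∀ B C, MeasurableSet[m₁] B → MeasurableSet[m'] C →
      ∫ x in B ∩ C, μ[f | m₁] x ∂μ = ∫ x in B ∩ C, f x ∂μ := by
    intro B C hB hC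
    set φ₁ := μ[C.indicator (fun _ => (1 : ℝ)) | m₁]
    set φ₂ := μ[C.indicator (fun _ => (1 : ℝ)) | m₂]
    have h_φ : ∀ g : Ω → ℝ, ∫ x in B, g x * φ₂ x ∂μ = ∫ x in B, g x * φ₁ x ∂μ := fun g =>
      setIntegral_congr_ae (hm₁ B hB) ((h_cond C hC).mono fun x hx _ => congrArg (g x * ·) hx)
    calc ∫ x in B ∩ C, μ[f | m₁] x ∂μ
        = ∫ x in B, μ[f | m₁] x * φ₁ x ∂μ := by
          rw [setIntegral_inter_eq_setIntegral_mul_condExp_indicator hm₂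
            (stronglyMeasurable_condExp.mono h₁₂) hcond_int (h₁₂ B hB) (hm' C hC), h_φ]
      _ = ∫ x in B, f x * φ₁ x ∂μ :=
          (setIntegral_mul_eq_setIntegral_condExp_mul hm₁ hf_int stronglyMeasurable_condExp
            (ae_norm_condExp_indicator_one_le C) hB).symm
      _ = ∫ x in B ∩ C, f x ∂μ := by
          rw [setIntegral_inter_eq_setIntegral_mul_condExp_indicator hm₂ hf hf_int (h₁₂ B hB)
            (hm' C hC), h_φ]
  refine (ae_eq_condExp_of_forall_setIntegral_eq hsup hf_int
    (fun s _ _ => hcond_int.integrableOn) (fun s hs _ => ?_)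
    (stronglyMeasurable_condExp.mono le_sup_left).aestronglyMeasurable).symm
  refine setIntegral_eq_setIntegral_of_isPiSystem hsup
    (MeasurableSpace.generateFrom_image2_inter m₁ m').symm
    ((@MeasurableSpace.isPiSystem_measurableSet _ m₁).image2_inter
      (@MeasurableSpace.isPiSystem_measurableSet _ m'))
    hcond_int hf_int ?_ (integral_condExp hm₁) hs
  rintro _ ⟨B, hB, C, hC, rfl⟩
  exact h_rect B C hB hC

theorem condExp_comp_ae_eq_comp_condExp {α E : Type*} [NormedAddCommGroup E] [NormedSpace ℝ E]
    [CompleteSpace E] {m mα : MeasurableSpace α} {φ : Ω → α} (hφ : Measurable φ)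
    {P : Measure α} (hP : μ.map φ = P) (hm : m ≤ mα) {g : α → E}
    (hg : Integrable g P) :
    μ[g ∘ φ | m.comap φ] =ᵐ[μ] P[g | m] ∘ φ := by
  subst hP
  have h_comap : m.comap φ ≤ m₀ := (MeasurableSpace.comap_mono hm).trans hφ.comap_le
  have hg_meas : StronglyMeasurable (μ.map φ)[g | m] := stronglyMeasurable_condExp.mono hm
  have hg_int : Integrable (g ∘ φ) μ := hg.comp_measurable hφ
  have hcond_int : Integrable ((μ.map φ)[g | m] ∘ φ) μ :=
    (integrable_map_measure hg_meas.aestronglyMeasurable hφ.aemeasurable).mp integrable_condExp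
  refine (ae_eq_condExp_of_forall_setIntegral_eq h_comap hg_int
    (fun s _ _ => hcond_int.integrableOn) ?_
    (stronglyMeasurable_condExp.comp_measurable (comap_measurable φ)).aestronglyMeasurable).symm
  rintro _ ⟨B, hB, rfl⟩ -
  rw [Function.comp_def, Function.comp_def,
    ← setIntegral_map (hm B hB) hg_meas.aestronglyMeasurable hφ.aemeasurable,
    ← setIntegral_map (hm B hB) hg.1 hφ.aemeasurable, setIntegral_condExp hm hg hB]

end CondExp

theorem FX_le_pi (T t : ℕ) : FX T t ≤ MeasurableSpace.pi :=
  iSup₂_le fun i _ => (measurable_pi_apply i).comap_le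

theorem FX_mono (T : ℕ) : Monotone (FX T) :=
  fun _ _ hst => iSup₂_mono' fun i hi => ⟨i, hi.trans_le hst, le_rfl⟩

theorem FX_self_eq_pi (T : ℕ) : FX T T = MeasurableSpace.pi :=
  (FX_le_pi T T).antisymm (iSup_le fun i => le_iSup₂_of_le i i.2 le_rfl)

theorem prodX_le (T t : ℕ) : prodX T t ≤ Prod.instMeasurableSpace :=
  (MeasurableSpace.comap_mono (FX_le_pi T t)).trans measurable_fst.comap_le

theorem prodY_le (T t : ℕ) : prodY T t ≤ Prod.instMeasurableSpace :=
  (MeasurableSpace.comap_mono (FX_le_pi T t)).trans measurable_snd.comap_le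

theorem Measurable.stronglyMeasurable_prodX_comp_fst {T : ℕ} {g : PathSp T → ℝ}
    (hg : Measurable g) : StronglyMeasurable[prodX T T] fun z => g z.1 := by
  rw [prodX, FX_self_eq_pi]
  exact hg.stronglyMeasurable.comp_measurable (comap_measurable Prod.fst)

theorem Causal.condExp_indicator_ae_eq {T : ℕ} {π : Measure (PathSp T × PathSp T)}
    (h : Causal T π) {t : ℕ} (ht : t ≤ T) {C : Set (PathSp T × PathSp T)}
    (hC : MeasurableSet[prodY T t] C) :
    π[C.indicator (fun _ => (1 : ℝ)) | prodX T T]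
      =ᵐ[π] π[C.indicator (fun _ => (1 : ℝ)) | prodX T t] := by
  obtain ⟨A, hA, rfl⟩ := hC
  exact h t ht A hA

theorem bicausal_condexp_general
    (T : ℕ) (P Q : Measure (PathSp T))
    (π : Measure (PathSp T × PathSp T)) [IsProbabilityMeasure π]
    (hπ : IsCoupling π P Q) (hbc : Bicausal T π)
    (g : PathSp T → ℝ) (hgm : Measurable g) (hgi : Integrable g P)
    (t : ℕ) (htT : t ≤ T) :
    (π[fun z => g z.1 | prodXY T t]) =ᵐ[π] fun z => (P[g | FX T t]) z.1 := by
  have hg_int : Integrable (fun z => g z.1) π := (hπ.1 ▸ hgi).comp_measurable measurable_fst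
  have h_sup : π[fun z => g z.1 | prodX T t ⊔ prodY T t] =ᵐ[π] π[fun z => g z.1 | prodX T t] :=
    condExp_sup_ae_eq_of_condExp_indicator_ae_eq (MeasurableSpace.comap_mono (FX_mono T htT))
      (prodX_le T T) (prodY_le T t) (fun _ => hbc.1.condExp_indicator_ae_eq htT)
      hgm.stronglyMeasurable_prodX_comp_fst hg_int
  exact h_sup.trans (condExp_comp_ae_eq_comp_condExp measurable_fst hπ.1 (FX_le_pi T t) hgi)

/-- for a bicausal coupling π between P and Q and g integrable under P,
E_π[g(X) | ℱ_t^{X,Y}] = E_P[g(X) | ℱ_t^X] π-almost surely, for each 1 ≤ t ≤ T. -/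
theorem bicausal_condexp
    (T : ℕ) (p : ℝ) (hp : 1 < p)
    (P Q : Measure (PathSp T)) [IsProbabilityMeasure P] [IsProbabilityMeasure Q]
    (hPm : FiniteMoment p P) (hQm : FiniteMoment p Q)
    (π : Measure (PathSp T × PathSp T)) [IsProbabilityMeasure π]
    (hπ : IsCoupling π P Q) (hbc : Bicausal T π)
    (g : PathSp T → ℝ) (hgm : Measurable g) (hgi : Integrable g P)
    (t : ℕ) (ht1 : 1 ≤ t) (htT : t ≤ T) :
    (π[fun z => g z.1 | prodXY T t]) =ᵐ[π] fun z => (P[g | FX T t]) z.1 :=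
  bicausal_condexp_general T P Q π hπ hbc g hgm hgi t htT

end
end

section
/- Let f : ℝ^T × ℝ^T → ℝ be such that for every x, f(x,·) is twice continuously differentiable and strongly convex: ∇²_a f(x,a) ≻ ε(x)·I for a ∈ [−L,L]^T with P(ε(X) > 0) = 1, and suppose E_P[|f(X,a)|] < ∞ for all a ∈ [−L,L]^T. Then there exists exactly one predictable control a* ∈ 𝒜 (up to P-a.s. equality) with v(P) = E_P[f(X, a*(X))], where v(P) = inf_{a ∈ 𝒜} E_P[f(X,a(X))] and 𝒜 is the set of predictable controls bounded by L. -/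
open MeasureTheory ProbabilityTheory Filter Set

noncomputable section

/-- Predictable controls bounded by `L`: `a_t` depends only on `x_1,…,x_{t-1}`
and `|a_t| ≤ L`. -/
def PredictableControl (T : ℕ) (L : ℝ) (a : Fin T → PathSp T → ℝ) : Prop :=
  ∀ t : Fin T, Measurable[FX T (t : ℕ)] (a t) ∧ ∀ x, |a t x| ≤ L

/-- Value `v(Q) = inf_{a ∈ 𝒜} E_Q[f(X, a(X))]` of the multiperiod stochastic
optimization problem. -/
def cval (T : ℕ) (L : ℝ) (f : PathSp T → (Fin T → ℝ) → ℝ)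
    (Q : Measure (PathSp T)) : ℝ :=
  sInf { v | ∃ a, PredictableControl T L a ∧ v = ∫ x, f x (fun t => a t x) ∂Q }

open Topology

/-! Write `J a = E[f(X, a(X))]` and `v` for its infimum over controls. Strong convexity of `f x`
on the cube gives, for controls `a`, `b` and their midpoint `m` (again a control),
`E[ε ∑ₜ (bₜ - aₜ)²] ≤ 4 (J a + J b - 2 J m) ≤ 4 (J a - v) + 4 (J b - v)`.
Along a minimizing sequence with `J (A k) < v + 8⁻ᵏ` this makes `∑ₖ 2ᵏ ε |A (k+1) - A k|²`
integrable, hence finite a.s., so the controls converge a.s.; the limit is predictable and attains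
`v` by dominated convergence, since a convex function on the cube is bounded by its values at the
vertices and at `0`. For two optimal controls the same inequality forces `ε |b - a|² = 0` a.s. -/

section SecondDerivative

variable {E : Type*} [NormedAddCommGroup E] [NormedSpace ℝ E] {F : E → ℝ}

theorem ContDiff.convexOn_Icc_sub_sq (hF : ContDiff ℝ 2 F) (c u : E) {m : ℝ}
    (hm : ∀ s ∈ Ioo (0 : ℝ) 1, m ≤ fderiv ℝ (fderiv ℝ F) (c + s • u) u u) :
    ConvexOn ℝ (Icc 0 1) fun s => F (c + s • u) - m / 2 * s ^ 2 := by
  have hline (s : ℝ) : HasDerivAt (fun s : ℝ => c + s • u) u s := by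
    simpa using ((hasDerivAt_id s).smul_const u).const_add c
  have hF' (s : ℝ) : HasDerivAt (fun s => F (c + s • u) - m / 2 * s ^ 2)
      (fderiv ℝ F (c + s • u) u - m * s) s := by
    have := ((hF.differentiable two_ne_zero _).hasFDerivAt.comp_hasDerivAt s (hline s)).sub
      ((hasDerivAt_pow 2 s).const_mul (m / 2))
    exact this.congr_deriv (by norm_num; ring)
  have hF'' (s : ℝ) : HasDerivAt (fun s => fderiv ℝ F (c + s • u) u - m * s)
      (fderiv ℝ (fderiv ℝ F) (c + s • u) u u - m) s := by
    have hD : HasFDerivAt (fderiv ℝ F) (fderiv ℝ (fderiv ℝ F) (c + s • u)) (c + s • u) :=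
      ((hF.fderiv_right (m := 1) (by norm_num)).differentiable one_ne_zero _).hasFDerivAt
    have := ((ContinuousLinearMap.apply ℝ ℝ u).hasFDerivAt.comp _ hD).comp_hasDerivAt s (hline s)
    exact this.sub (by simpa using (hasDerivAt_id' s).const_mul m)
  have hderiv : deriv (fun s => F (c + s • u) - m / 2 * s ^ 2) =
      fun s => fderiv ℝ F (c + s • u) u - m * s := funext fun s => (hF' s).deriv
  refine convexOn_of_deriv2_nonneg (convex_Icc 0 1)
    (fun s _ => (hF' s).continuousAt.continuousWithinAt)
    (fun s _ => (hF' s).differentiableAt.differentiableWithinAt) ?_ ?_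
  · rw [hderiv]
    exact fun s _ => (hF'' s).differentiableAt.differentiableWithinAt
  · intro s hs
    rw [interior_Icc] at hs
    simp only [Function.iterate_succ, Function.iterate_zero, Function.comp_apply, id_eq, hderiv,
      (hF'' s).deriv]
    linarith [hm s hs]

theorem ContDiff.apply_smul_add_smul_le (hF : ContDiff ℝ 2 F) {c d : E} {m : ℝ}
    (hm : ∀ s ∈ Ioo (0 : ℝ) 1, m ≤ fderiv ℝ (fderiv ℝ F) (c + s • (d - c)) (d - c) (d - c))
    {p q : ℝ} (hp : 0 ≤ p) (hq : 0 ≤ q) (hpq : p + q = 1) :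
    F (p • c + q • d) ≤ p * F c + q * F d - p * q * m / 2 := by
  have h := (hF.convexOn_Icc_sub_sq c (d - c) hm).2 (left_mem_Icc.2 zero_le_one)
    (right_mem_Icc.2 zero_le_one) hp hq hpq
  have hpt : c + q • (d - c) = p • c + q • d := by
    rw [eq_sub_of_add_eq hpq]; module
  simp only [smul_eq_mul, mul_zero, mul_one, zero_add, hpt, zero_smul, add_zero, one_smul,
    add_sub_cancel] at h
  rw [eq_sub_of_add_eq hpq] at h ⊢
  linear_combination h

theorem ContDiff.convexOn_of_fderiv_fderiv_nonneg (hF : ContDiff ℝ 2 F) {s : Set E}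
    (hs : Convex ℝ s) (h : ∀ z ∈ s, ∀ u, 0 ≤ fderiv ℝ (fderiv ℝ F) z u u) : ConvexOn ℝ s F := by
  refine ⟨hs, fun c hc d hd p q hp hq hpq => ?_⟩
  have := hF.apply_smul_add_smul_le (m := 0)
    (fun r hr => h _ (hs.add_smul_sub_mem hc hd ⟨hr.1.le, hr.2.le⟩) _) hp hq hpq
  simpa using this

theorem ContDiff.apply_half_add_le {ι : Type*} [Fintype ι] {F : (ι → ℝ) → ℝ}
    (hF : ContDiff ℝ 2 F) {s : Set (ι → ℝ)} (hs : Convex ℝ s) {m : ℝ}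
    (hm : ∀ z ∈ s, ∀ u : ι → ℝ, fderiv ℝ (fderiv ℝ F) z u u ≥ m * ∑ i, u i ^ 2)
    {c d : ι → ℝ} (hc : c ∈ s) (hd : d ∈ s) :
    F ((2⁻¹ : ℝ) • (c + d)) ≤ (F c + F d) / 2 - m / 8 * ∑ i, (d i - c i) ^ 2 := by
  have h := hF.apply_smul_add_smul_le
    (fun r hr => hm _ (hs.add_smul_sub_mem hc hd ⟨hr.1.le, hr.2.le⟩) _)
    (by norm_num : (0 : ℝ) ≤ 2⁻¹) (by norm_num : (0 : ℝ) ≤ 2⁻¹) (by norm_num)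
  rw [← smul_add] at h
  simp only [Pi.sub_apply] at h
  linarith

end SecondDerivative

theorem ConvexOn.abs_le_sum_abs_add {E : Type*} [AddCommGroup E] [Module ℝ E] {V : Finset E}
    {F : E → ℝ} (hF : ConvexOn ℝ (convexHull ℝ ↑V) F) {c : E} (hc : c ∈ convexHull ℝ ↑V)
    (hc' : -c ∈ convexHull ℝ ↑V) : |F c| ≤ ∑ v ∈ V, |F v| + 2 * |F 0| := by
  have hmax {z : E} (hz : z ∈ convexHull ℝ ↑V) : F z ≤ ∑ v ∈ V, |F v| := by
    obtain ⟨v, hv, hzv⟩ := hF.exists_ge_of_mem_convexHull (subset_convexHull ℝ _) hz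
    exact hzv.trans <| (le_abs_self _).trans <|
      Finset.single_le_sum (f := fun v => |F v|) (fun _ _ => abs_nonneg _) hv
  have hmid := hF.2 hc hc' (by norm_num : (0 : ℝ) ≤ 1 / 2) (by norm_num : (0 : ℝ) ≤ 1 / 2)
    (by norm_num)
  rw [← smul_add, add_neg_cancel, smul_zero, smul_eq_mul, smul_eq_mul] at hmid
  rw [abs_le]
  constructor <;> linarith [hmax hc, hmax hc', neg_abs_le (F 0), le_abs_self (F 0)]

theorem convexHull_piFinset_pair_eq_Icc {ι : Type*} [Fintype ι] [DecidableEq ι] {L : ℝ}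
    (hL : 0 ≤ L) :
    convexHull ℝ (Fintype.piFinset fun _ : ι => ({-L, L} : Finset ℝ) : Set (ι → ℝ)) =
      Icc (fun _ => -L) (fun _ => L) := by
  rw [Fintype.coe_piFinset, convexHull_pi, ← pi_univ_Icc]
  congr! 2 with i
  rw [Finset.coe_pair, convexHull_pair, segment_eq_Icc (by linarith)]

theorem exists_integrable_bound_of_convexOn_Icc {Ω ι : Type*} [MeasurableSpace Ω]
    {μ : Measure Ω} [Fintype ι] {L : ℝ} (hL : 0 ≤ L) {f : Ω → (ι → ℝ) → ℝ}
    (hconv : ∀ᵐ x ∂μ, ConvexOn ℝ (Icc (fun _ => -L) (fun _ => L)) (f x))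
    (hint : ∀ c ∈ Icc (fun _ : ι => -L) (fun _ => L), Integrable (fun x => f x c) μ) :
    ∃ G : Ω → ℝ, Integrable G μ ∧
      ∀ᵐ x ∂μ, ∀ c ∈ Icc (fun _ => -L) (fun _ => L), |f x c| ≤ G x := by
  classical
  set V := Fintype.piFinset fun _ : ι => ({-L, L} : Finset ℝ)
  have hV : convexHull ℝ (V : Set (ι → ℝ)) = Icc (fun _ => -L) (fun _ => L) :=
    convexHull_piFinset_pair_eq_Icc hL
  have h0 : (0 : ι → ℝ) ∈ Icc (fun _ => -L) (fun _ => L) :=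
    ⟨fun _ => neg_nonpos.2 hL, fun _ => hL⟩
  refine ⟨fun x => ∑ v ∈ V, |f x v| + 2 * |f x 0|, ?_, ?_⟩
  · refine (integrable_finsetSum _ fun v hv => (hint v ?_).abs).add ((hint 0 h0).abs.const_mul 2)
    exact hV ▸ subset_convexHull ℝ _ hv
  · filter_upwards [hconv] with x hx c hc
    have hc' : -c ∈ Icc (fun _ => -L) (fun _ => L) :=
      ⟨fun i => neg_le_neg (hc.2 i), fun i => neg_le.1 (hc.1 i)⟩
    rw [← hV] at hx hc hc'
    exact hx.abs_le_sum_abs_add hc hc'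

section Caratheodory

variable {Ω E β : Type*} [MeasurableSpace Ω] {μ : Measure Ω} [NormedAddCommGroup β]
  {f : Ω → E → β}

theorem MeasureTheory.SimpleFunc.aestronglyMeasurable_apply_comp (φ : SimpleFunc Ω E)
    (hf : ∀ c ∈ φ.range, AEStronglyMeasurable (fun x => f x c) μ) :
    AEStronglyMeasurable (fun x => f x (φ x)) μ := by
  classical
  have hsum : (fun x => f x (φ x)) =
      fun x => ∑ c ∈ φ.range, (φ ⁻¹' {c}).indicator (fun x => f x c) x := by
    ext x
    rw [Finset.sum_eq_single_of_mem (φ x) (φ.mem_range_self x),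
      indicator_of_mem (s := φ ⁻¹' {φ x}) rfl]
    exact fun c _ hc => indicator_of_notMem (Ne.symm hc) _
  rw [hsum]
  exact Finset.aestronglyMeasurable_fun_sum _ fun c hc =>
    (hf c hc).indicator (φ.measurableSet_fiber c)

theorem aestronglyMeasurable_apply_comp_of_continuous [MeasurableSpace E] [PseudoEMetricSpace E]
    [OpensMeasurableSpace E] {s : Set E} [TopologicalSpace.SeparableSpace s]
    (hcont : ∀ x, Continuous (f x)) (hf : ∀ c ∈ s, AEStronglyMeasurable (fun x => f x c) μ)
    {a : Ω → E} (ha : Measurable a) (has : ∀ x, a x ∈ s) :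
    AEStronglyMeasurable (fun x => f x (a x)) μ := by
  rcases isEmpty_or_nonempty Ω with _ | ⟨⟨x₀⟩⟩
  · exact .of_subsingleton_dom
  let φ := SimpleFunc.approxOn a ha s (a x₀) (has x₀)
  refine aestronglyMeasurable_of_tendsto_ae atTop (f := fun n x => f x (φ n x))
    (fun n => (φ n).aestronglyMeasurable_apply_comp fun c hc => hf c ?_) (ae_of_all _ fun x => ?_)
  · obtain ⟨x, rfl⟩ := SimpleFunc.mem_range.1 hc
    exact SimpleFunc.approxOn_mem ha _ n x
  · exact ((hcont x).tendsto _).comp (SimpleFunc.tendsto_approxOn ha _ (subset_closure (has x)))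

end Caratheodory

theorem cauchySeq_of_summable_two_pow_mul_sq {u : ℕ → ℝ}
    (hu : Summable fun k => 2 ^ k * (u (k + 1) - u k) ^ 2) : CauchySeq u := by
  refine cauchySeq_of_summable_dist <| .of_nonneg_of_le (fun _ => dist_nonneg) (fun k => ?_)
    ((hu.add summable_geometric_two).div_const 2)
  -- AM-GM: `2 |Δ| ≤ 2ᵏ Δ² + 2⁻ᵏ`
  have h2k : (0 : ℝ) < 2 ^ k := by positivity
  rw [Real.dist_eq, abs_sub_comm, ← sq_abs (u (k + 1) - u k), one_div_pow,
    le_div_iff₀ two_pos, ← mul_le_mul_iff_of_pos_left h2k]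
  field_simp
  nlinarith [two_mul_le_add_sq (2 ^ k * |u (k + 1) - u k|) 1]

section AECauchy

variable {Ω : Type*} [MeasurableSpace Ω] {μ : Measure Ω}

theorem ae_summable_of_summable_integral {g : ℕ → Ω → ℝ} (hg : ∀ k, Integrable (g k) μ)
    (hg₀ : ∀ k, 0 ≤ᵐ[μ] g k) (hsum : Summable fun k => ∫ x, g k x ∂μ) :
    ∀ᵐ x ∂μ, Summable fun k => g k x := by
  have hnorm := summable_norm_of_tsum_eLpNorm_ne_top le_rfl (fun k => (hg k).1) ?_
  · filter_upwards [hnorm, ae_all_iff.2 hg₀] with x hx hx₀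
    exact hx.of_norm
  · have (k : ℕ) : eLpNorm (g k) 1 μ = ENNReal.ofReal (∫ x, g k x ∂μ) := by
      rw [eLpNorm_one_eq_lintegral_enorm, ofReal_integral_eq_lintegral_ofReal (hg k) (hg₀ k)]
      exact lintegral_congr_ae <| by
        filter_upwards [hg₀ k] with x hx using Real.enorm_of_nonneg hx
    simp_rw [this, ← ENNReal.ofReal_tsum_of_nonneg (fun k => integral_nonneg_of_ae (hg₀ k)) hsum]
    exact ENNReal.ofReal_ne_top

theorem ae_cauchySeq_of_integral_mul_sum_sq_le {ι : Type*} [Fintype ι] {w : Ω → ℝ}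
    (hw : ∀ᵐ x ∂μ, 0 < w x) {u : ℕ → ι → Ω → ℝ} {C : ℝ}
    (hint : ∀ k, Integrable (fun x => w x * ∑ i, (u (k + 1) i x - u k i x) ^ 2) μ)
    (hle : ∀ k, ∫ x, w x * ∑ i, (u (k + 1) i x - u k i x) ^ 2 ∂μ ≤ C * (1 / 8) ^ k) :
    ∀ᵐ x ∂μ, ∀ i, CauchySeq fun k => u k i x := by
  have hnn (k : ℕ) : 0 ≤ᵐ[μ] fun x => 2 ^ k * (w x * ∑ i, (u (k + 1) i x - u k i x) ^ 2) := by
    filter_upwards [hw] with x hx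
    positivity
  have hsum : Summable fun k => ∫ x, 2 ^ k * (w x * ∑ i, (u (k + 1) i x - u k i x) ^ 2) ∂μ := by
    refine .of_nonneg_of_le (fun k => integral_nonneg_of_ae (hnn k)) (fun k => ?_)
      ((summable_geometric_of_lt_one (by norm_num) (by norm_num : (1 / 4 : ℝ) < 1)).mul_left C)
    rw [integral_const_mul]
    calc 2 ^ k * ∫ x, w x * ∑ i, (u (k + 1) i x - u k i x) ^ 2 ∂μ
        ≤ 2 ^ k * (C * (1 / 8) ^ k) := by gcongr; exact hle k
      _ = C * (1 / 4) ^ k := by rw [mul_left_comm, ← mul_pow]; norm_num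
  filter_upwards [ae_summable_of_summable_integral (fun k => (hint k).const_mul _) hnn hsum, hw]
    with x hx hwx i
  have hsum_x : Summable fun k => 2 ^ k * ∑ i, (u (k + 1) i x - u k i x) ^ 2 :=
    (hx.mul_left (w x)⁻¹).congr fun k => by field_simp
  refine cauchySeq_of_summable_two_pow_mul_sq (hsum_x.of_nonneg_of_le (fun k => by positivity)
    fun k => ?_)
  gcongr
  exact Finset.single_le_sum (f := fun i => (u (k + 1) i x - u k i x) ^ 2)
    (fun _ _ => sq_nonneg _) (Finset.mem_univ i)

theorem ae_eq_of_integral_mul_sum_sq_nonpos {ι : Type*} [Fintype ι] {w : Ω → ℝ}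
    (hw : ∀ᵐ x ∂μ, 0 < w x) {a b : ι → Ω → ℝ}
    (hint : Integrable (fun x => w x * ∑ i, (b i x - a i x) ^ 2) μ)
    (hle : ∫ x, w x * ∑ i, (b i x - a i x) ^ 2 ∂μ ≤ 0) : ∀ i, b i =ᵐ[μ] a i := by
  have hnn : 0 ≤ᵐ[μ] fun x => w x * ∑ i, (b i x - a i x) ^ 2 := by
    filter_upwards [hw] with x hx
    positivity
  have hzero := (integral_eq_zero_iff_of_nonneg_ae hnn hint).1
    (le_antisymm hle (integral_nonneg_of_ae hnn))
  intro i
  filter_upwards [hzero, hw] with x hx hwx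
  have hsum := (mul_eq_zero.1 hx).resolve_left hwx.ne'
  have hi := (Finset.sum_eq_zero_iff_of_nonneg fun i _ => sq_nonneg _).1 hsum i
    (Finset.mem_univ i)
  exact sub_eq_zero.1 (pow_eq_zero_iff two_ne_zero |>.1 hi)

end AECauchy

theorem FX_le (T t : ℕ) : FX T t ≤ (inferInstance : MeasurableSpace (PathSp T)) :=
  iSup₂_le fun i _ => (measurable_pi_apply i).comap_le

def clampedLimsup (L : ℝ) (u : ℕ → ℝ) : ℝ :=
  max (-L) (min L (limsup u atTop))

theorem clampedLimsup_eq_of_tendsto {L ℓ : ℝ} {u : ℕ → ℝ} (hu : Tendsto u atTop (𝓝 ℓ))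
    (hbdd : ∀ k, |u k| ≤ L) : clampedLimsup L u = ℓ := by
  have hℓ : |ℓ| ≤ L := le_of_tendsto' hu.abs hbdd
  rw [clampedLimsup, hu.limsup_eq, min_eq_right (abs_le.1 hℓ).2, max_eq_right (abs_le.1 hℓ).1]

namespace PredictableControl

variable {T : ℕ} {L : ℝ} {a b : Fin T → PathSp T → ℝ}

theorem measurable_apply (ha : PredictableControl T L a) (t : Fin T) : Measurable (a t) :=
  (ha t).1.mono (FX_le T t) le_rfl

theorem measurable (ha : PredictableControl T L a) : Measurable fun x t => a t x :=
  measurable_pi_lambda _ ha.measurable_apply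

theorem mem_Icc (ha : PredictableControl T L a) (x : PathSp T) :
    (fun t => a t x) ∈ Icc (fun _ => -L) (fun _ => L) :=
  ⟨fun t => (abs_le.1 ((ha t).2 x)).1, fun t => (abs_le.1 ((ha t).2 x)).2⟩

theorem zero (hL : 0 ≤ L) : PredictableControl T L 0 :=
  fun _ => ⟨measurable_const, fun _ => by simpa using hL⟩

theorem half_add (ha : PredictableControl T L a) (hb : PredictableControl T L b) :
    PredictableControl T L ((2⁻¹ : ℝ) • (a + b)) := by
  refine fun t => ⟨((ha t).1.add (hb t).1).const_smul (2⁻¹ : ℝ), fun x => ?_⟩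
  have := abs_add_le (a t x) (b t x)
  simp only [Pi.smul_apply, Pi.add_apply, smul_eq_mul, abs_mul, abs_inv, abs_two]
  linarith [(ha t).2 x, (hb t).2 x]

theorem clampedLimsup {A : ℕ → Fin T → PathSp T → ℝ}
    (hA : ∀ k, PredictableControl T L (A k)) :
    PredictableControl T L fun t x => clampedLimsup L fun k => A k t x := by
  refine fun t => ⟨measurable_const.max (measurable_const.min
    (Measurable.limsup fun k => (hA k t).1)), fun x => abs_le.2 ⟨le_max_left _ _, ?_⟩⟩
  exact max_le (by linarith [abs_nonneg (A 0 t x), (hA 0 t).2 x]) (min_le_left _ _)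

end PredictableControl

section Cost

variable {T : ℕ} {L : ℝ} {P : Measure (PathSp T)} {f : PathSp T → (Fin T → ℝ) → ℝ}

def cost (f : PathSp T → (Fin T → ℝ) → ℝ) (P : Measure (PathSp T))
    (a : Fin T → PathSp T → ℝ) : ℝ :=
  ∫ x, f x (fun t => a t x) ∂P

theorem exists_cost_lt_cval_add (hL : 0 ≤ L) {δ : ℝ} (hδ : 0 < δ) :
    ∃ a, PredictableControl T L a ∧ cost f P a < cval T L f P + δ := by
  obtain ⟨_, ⟨a, ha, rfl⟩, hlt⟩ := exists_lt_of_csInf_lt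
    (s := {v | ∃ a, PredictableControl T L a ∧ v = cost f P a}) ⟨_, 0, .zero hL, rfl⟩
    (lt_add_of_pos_right (cval T L f P) hδ)
  exact ⟨a, ha, hlt⟩

theorem PredictableControl.integrable_cost (hcont : ∀ x, Continuous (f x))
    (hint : ∀ c ∈ Icc (fun _ : Fin T => -L) (fun _ => L), Integrable (fun x => f x c) P)
    {G : PathSp T → ℝ} (hG : Integrable G P)
    (hfG : ∀ᵐ x ∂P, ∀ c ∈ Icc (fun _ => -L) (fun _ => L), |f x c| ≤ G x)
    {a : Fin T → PathSp T → ℝ} (ha : PredictableControl T L a) :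
    Integrable (fun x => f x fun t => a t x) P := by
  refine hG.mono' (aestronglyMeasurable_apply_comp_of_continuous hcont
    (fun c hc => (hint c hc).1) ha.measurable ha.mem_Icc) ?_
  filter_upwards [hfG] with x hx using hx _ (ha.mem_Icc x)

theorem PredictableControl.cval_le_cost (hcont : ∀ x, Continuous (f x))
    (hint : ∀ c ∈ Icc (fun _ : Fin T => -L) (fun _ => L), Integrable (fun x => f x c) P)
    {G : PathSp T → ℝ} (hG : Integrable G P)
    (hfG : ∀ᵐ x ∂P, ∀ c ∈ Icc (fun _ => -L) (fun _ => L), |f x c| ≤ G x)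
    {a : Fin T → PathSp T → ℝ} (ha : PredictableControl T L a) :
    cval T L f P ≤ cost f P a := by
  refine csInf_le ⟨-∫ x, G x ∂P, ?_⟩ ⟨a, ha, rfl⟩
  rintro _ ⟨b, hb, rfl⟩
  rw [← integral_neg]
  refine integral_mono_ae hG.neg (hb.integrable_cost hcont hint hG hfG) ?_
  filter_upwards [hfG] with x hx using neg_le_of_abs_le (hx _ (hb.mem_Icc x))

theorem tendsto_cost_of_ae_tendsto (hcont : ∀ x, Continuous (f x))
    (hint : ∀ c ∈ Icc (fun _ : Fin T => -L) (fun _ => L), Integrable (fun x => f x c) P)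
    {G : PathSp T → ℝ} (hG : Integrable G P)
    (hfG : ∀ᵐ x ∂P, ∀ c ∈ Icc (fun _ => -L) (fun _ => L), |f x c| ≤ G x)
    {A : ℕ → Fin T → PathSp T → ℝ} (hA : ∀ k, PredictableControl T L (A k))
    {a : Fin T → PathSp T → ℝ}
    (hlim : ∀ᵐ x ∂P, ∀ t, Tendsto (fun k => A k t x) atTop (𝓝 (a t x))) :
    Tendsto (fun k => cost f P (A k)) atTop (𝓝 (cost f P a)) := by
  refine tendsto_integral_of_dominated_convergence G
    (fun k => ((hA k).integrable_cost hcont hint hG hfG).1) hG (fun k => ?_) ?_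
  · filter_upwards [hfG] with x hx using hx _ ((hA k).mem_Icc x)
  · filter_upwards [hlim] with x hx
    exact ((hcont x).tendsto _).comp (tendsto_pi_nhds.2 hx)

theorem integral_mul_sum_sq_le_cost (hC2 : ∀ x, ContDiff ℝ 2 (f x))
    {ε : PathSp T → ℝ} (hεm : Measurable ε) (hεpos : ∀ᵐ x ∂P, 0 < ε x)
    (hstrong : ∀ x, ∀ a ∈ Icc (fun _ : Fin T => -L) (fun _ => L), ∀ u : Fin T → ℝ,
      fderiv ℝ (fderiv ℝ (f x)) a u u ≥ ε x * ∑ t, u t ^ 2)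
    (hJ : ∀ a, PredictableControl T L a → Integrable (fun x => f x fun t => a t x) P)
    {a b : Fin T → PathSp T → ℝ} (ha : PredictableControl T L a)
    (hb : PredictableControl T L b) :
    Integrable (fun x => ε x * ∑ t, (b t x - a t x) ^ 2) P ∧
      ∫ x, ε x * ∑ t, (b t x - a t x) ^ 2 ∂P ≤
        4 * (cost f P a + cost f P b - 2 * cost f P ((2⁻¹ : ℝ) • (a + b))) := by
  have hpt (x : PathSp T) : ε x * ∑ t, (b t x - a t x) ^ 2 ≤
      4 * (f x (fun t => a t x) + f x (fun t => b t x)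
        - 2 * f x fun t => ((2⁻¹ : ℝ) • (a + b)) t x) := by
    have := (hC2 x).apply_half_add_le (convex_Icc _ _) (hstrong x) (ha.mem_Icc x) (hb.mem_Icc x)
    change _ ≤ 4 * (_ - 2 * f x ((2⁻¹ : ℝ) • ((fun t => a t x) + fun t => b t x)))
    linarith
  have hgap : Integrable (fun x => 4 * (f x (fun t => a t x) + f x (fun t => b t x)
      - 2 * f x fun t => ((2⁻¹ : ℝ) • (a + b)) t x)) P :=
    (((hJ a ha).add (hJ b hb)).sub ((hJ _ (ha.half_add hb)).const_mul 2)).const_mul 4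
  have hint : Integrable (fun x => ε x * ∑ t, (b t x - a t x) ^ 2) P := by
    have hmeas : Measurable fun x => ε x * ∑ t, (b t x - a t x) ^ 2 :=
      hεm.mul <| Finset.measurable_sum _ fun t _ =>
        ((hb.measurable_apply t).sub (ha.measurable_apply t)).pow_const 2
    refine hgap.mono' hmeas.aestronglyMeasurable ?_
    filter_upwards [hεpos] with x hx
    rw [Real.norm_eq_abs, abs_of_nonneg (by positivity)]
    exact hpt x
  refine ⟨hint, (integral_mono hint hgap hpt).trans_eq ?_⟩
  rw [integral_const_mul, integral_sub, integral_add (hJ a ha) (hJ b hb), integral_const_mul]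
  · rfl
  · exact (hJ a ha).add (hJ b hb)
  · exact (hJ _ (ha.half_add hb)).const_mul 2

theorem exists_cost_eq_cval (hL : 0 ≤ L) (hcont : ∀ x, Continuous (f x))
    (hint : ∀ c ∈ Icc (fun _ : Fin T => -L) (fun _ => L), Integrable (fun x => f x c) P)
    {G : PathSp T → ℝ} (hG : Integrable G P)
    (hfG : ∀ᵐ x ∂P, ∀ c ∈ Icc (fun _ => -L) (fun _ => L), |f x c| ≤ G x)
    {ε : PathSp T → ℝ} (hεpos : ∀ᵐ x ∂P, 0 < ε x)
    (hgap : ∀ a b, PredictableControl T L a → PredictableControl T L b →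
      Integrable (fun x => ε x * ∑ t, (b t x - a t x) ^ 2) P ∧
      ∫ x, ε x * ∑ t, (b t x - a t x) ^ 2 ∂P ≤
        4 * (cost f P a + cost f P b - 2 * cost f P ((2⁻¹ : ℝ) • (a + b)))) :
    ∃ a, PredictableControl T L a ∧ cost f P a = cval T L f P := by
  have hlow {a} (ha : PredictableControl T L a) := ha.cval_le_cost hcont hint hG hfG
  choose A hA hAv using fun k : ℕ =>
    exists_cost_lt_cval_add (f := f) (P := P) hL (pow_pos (by norm_num : (0 : ℝ) < 1 / 8) k)
  have hcauchy : ∀ᵐ x ∂P, ∀ t, CauchySeq fun k => A k t x := by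
    refine ae_cauchySeq_of_integral_mul_sum_sq_le hεpos (C := 8)
      (fun k => (hgap _ _ (hA k) (hA (k + 1))).1) fun k => ?_
    have hpow : (1 / 8 : ℝ) ^ (k + 1) ≤ (1 / 8) ^ k :=
      pow_le_pow_of_le_one (by norm_num) (by norm_num) k.le_succ
    linarith [(hgap _ _ (hA k) (hA (k + 1))).2, hlow ((hA k).half_add (hA (k + 1))),
      hAv k, hAv (k + 1)]
  refine ⟨_, .clampedLimsup hA, tendsto_nhds_unique
    (tendsto_cost_of_ae_tendsto hcont hint hG hfG hA ?_) ?_⟩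
  · filter_upwards [hcauchy] with x hx t
    obtain ⟨ℓ, hℓ⟩ := cauchySeq_tendsto_of_complete (hx t)
    rwa [clampedLimsup_eq_of_tendsto hℓ fun k => (hA k t).2 x]
  · have hv : Tendsto (fun k : ℕ => cval T L f P + (1 / 8) ^ k) atTop (𝓝 (cval T L f P)) := by
      simpa using tendsto_const_nhds.add
        (tendsto_pow_atTop_nhds_zero_of_lt_one (by norm_num : (0 : ℝ) ≤ 1 / 8) (by norm_num))
    exact tendsto_of_tendsto_of_tendsto_of_le_of_le tendsto_const_nhds hv
      (fun k => hlow (hA k)) fun k => (hAv k).le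

end Cost

theorem unique_optimizer_general
    (T : ℕ) (L : ℝ) (hL : 0 < L)
    (P : Measure (PathSp T))
    (f : PathSp T → (Fin T → ℝ) → ℝ)
    (hC2 : ∀ x, ContDiff ℝ 2 (f x))
    (ε : PathSp T → ℝ) (hεm : Measurable ε) (hεpos : ∀ᵐ x ∂P, 0 < ε x)
    (hstrong : ∀ x, ∀ a ∈ Set.Icc (fun _ : Fin T => -L) (fun _ => L),
      ∀ u : Fin T → ℝ,
        ((fderiv ℝ (fderiv ℝ (f x)) a) u) u ≥ ε x * ∑ t : Fin T, u t ^ 2)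
    (hint : ∀ a ∈ Set.Icc (fun _ : Fin T => -L) (fun _ => L),
      Integrable (fun x => f x a) P) :
    ∃ a : Fin T → PathSp T → ℝ, PredictableControl T L a ∧
      (∫ x, f x (fun t => a t x) ∂P) = cval T L f P ∧
      ∀ b : Fin T → PathSp T → ℝ, PredictableControl T L b →
        (∫ x, f x (fun t => b t x) ∂P) = cval T L f P →
        ∀ t : Fin T, b t =ᵐ[P] a t := by
  have hconv : ∀ᵐ x ∂P, ConvexOn ℝ (Icc (fun _ => -L) fun _ => L) (f x) := by
    filter_upwards [hεpos] with x hx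
    exact (hC2 x).convexOn_of_fderiv_fderiv_nonneg (convex_Icc _ _) fun a ha u =>
      le_trans (by positivity) (hstrong x a ha u)
  obtain ⟨G, hG, hfG⟩ := exists_integrable_bound_of_convexOn_Icc hL.le hconv hint
  have hcont (x : PathSp T) : Continuous (f x) := (hC2 x).continuous
  have hgap (a b) (ha : PredictableControl T L a) (hb : PredictableControl T L b) :=
    integral_mul_sum_sq_le_cost hC2 hεm hεpos hstrong
      (fun _ hc => hc.integrable_cost hcont hint hG hfG) ha hb
  obtain ⟨a, ha, hav⟩ := exists_cost_eq_cval hL.le hcont hint hG hfG hεpos hgap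
  refine ⟨a, ha, hav, fun b hb hbv => ?_⟩
  obtain ⟨hgap_int, hgap_le⟩ := hgap a b ha hb
  refine ae_eq_of_integral_mul_sum_sq_nonpos hεpos hgap_int (hgap_le.trans ?_)
  have hmid := (ha.half_add hb).cval_le_cost hcont hint hG hfG
  change cost f P b = _ at hbv
  linarith

/-- Lemma 3.3: existence and uniqueness (up to P-a.s. equality) of the
optimal predictable control under strong convexity. -/
theorem unique_optimizer
    (T : ℕ) (L : ℝ) (hL : 0 < L)
    (P : Measure (PathSp T)) [IsProbabilityMeasure P]
    (f : PathSp T → (Fin T → ℝ) → ℝ)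
    (hC2 : ∀ x, ContDiff ℝ 2 (f x))
    (ε : PathSp T → ℝ) (hεm : Measurable ε) (hεpos : ∀ᵐ x ∂P, 0 < ε x)
    (hstrong : ∀ x, ∀ a ∈ Set.Icc (fun _ : Fin T => -L) (fun _ => L),
      ∀ u : Fin T → ℝ,
        ((fderiv ℝ (fderiv ℝ (f x)) a) u) u ≥ ε x * ∑ t : Fin T, u t ^ 2)
    (hint : ∀ a ∈ Set.Icc (fun _ : Fin T => -L) (fun _ => L),
      Integrable (fun x => f x a) P) :
    ∃ a : Fin T → PathSp T → ℝ, PredictableControl T L a ∧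
      (∫ x, f x (fun t => a t x) ∂P) = cval T L f P ∧
      ∀ b : Fin T → PathSp T → ℝ, PredictableControl T L b →
        (∫ x, f x (fun t => b t x) ∂P) = cval T L f P →
        ∀ t : Fin T, b t =ᵐ[P] a t :=
  unique_optimizer_general T L hL P f hC2 ε hεm hεpos hstrong hint

end
end
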